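/- Let α ∈ (1,2) and let v : [0,∞) → [0, 2-α] be a continuous nonnegative function in L¹ satisfying v(t) = ∫_0^t e^{-(t-s)} v(αs)(2 - v(αs)) ds for all t ≥ 0. If v is not identically zero this leads to a contradiction; hence v ≡ 0. -/

import Mathlib

open MeasureTheory Set Filter

/-- Let `α ∈ (1,2)` and `v : [0,∞) → [0, 2-α]` continuous, in `L¹`, satisfy
`v(t) = ∫_0^t e^{-(t-s)} v(αs)(2 - v(αs)) ds` for all `t ≥ 0`. Then `v ≡ 0` on `[0,∞)`. -/
theorem fixed_point_forces_zero (α : ℝ) (hα : α ∈ Set.Ioo (1 : ℝ) 2) (v : ℝ → ℝ)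
    (hvcont : ContinuousOn v (Set.Ici 0))
    (hvrange : ∀ t : ℝ, 0 ≤ t → v t ∈ Set.Icc (0 : ℝ) (2 - α))
    (hL1 : IntegrableOn v (Set.Ioi 0))
    (heq : ∀ t : ℝ, 0 ≤ t →
      v t = ∫ s in (0 : ℝ)..t, Real.exp (-(t - s)) * (v (α * s) * (2 - v (α * s)))) :
    ∀ t : ℝ, 0 ≤ t → v t = 0 := by
  obtain ⟨hα1, hα2⟩ := hα
  have hαpos : (0:ℝ) < α := by linarith
  -- extend v to all of ℝ
  set u : ℝ → ℝ := fun t => v (max t 0) with hu_def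
  have hmax : ∀ t : ℝ, 0 ≤ t → u t = v t := fun t ht => by
    simp [hu_def, max_eq_left ht]
  have hucont : Continuous u :=
    hvcont.comp_continuous (continuous_id.max continuous_const) fun x => Set.mem_Ici.mpr (le_max_right _ _)
  have hu0 : ∀ t, 0 ≤ u t := fun t => (hvrange _ (le_max_right _ _)).1
  have hu2 : ∀ t, u t ≤ 2 - α := fun t => (hvrange _ (le_max_right _ _)).2
  set G : ℝ → ℝ := fun s => u (α * s) * (2 - u (α * s)) with hG_def
  have huα : Continuous fun s : ℝ => u (α * s) :=
    hucont.comp (continuous_const.mul continuous_id)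
  have hGcont : Continuous G := huα.mul (continuous_const.sub huα)
  have hG0 : ∀ s, 0 ≤ G s := fun s => by
    simp only [hG_def]; nlinarith [hu0 (α*s), hu2 (α*s)]
  have hGle : ∀ s, G s ≤ 2 * u (α * s) := fun s => by
    simp only [hG_def]; nlinarith [hu0 (α*s), hu2 (α*s)]
  have hGge : ∀ s, α * u (α * s) ≤ G s := fun s => by
    simp only [hG_def]; nlinarith [hu0 (α*s), hu2 (α*s)]
  -- integral equation for u
  have hequ : ∀ t : ℝ, 0 ≤ t → u t = ∫ s in (0:ℝ)..t, Real.exp (-(t - s)) * G s := by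
    intro t ht
    rw [hmax t ht, heq t ht]
    apply intervalIntegral.integral_congr
    intro s hs
    rw [Set.uIcc_of_le ht] at hs
    have hs0 : (0:ℝ) ≤ α * s := mul_nonneg hαpos.le hs.1
    simp only [hG_def, hmax _ hs0]
  set φ : ℝ → ℝ := fun t => Real.exp (-t) * ∫ s in (0:ℝ)..t, Real.exp s * G s with hφ_def
  have heqφ : ∀ t : ℝ, 0 ≤ t → u t = φ t := by
    intro t ht
    rw [hequ t ht]
    simp only [hφ_def]
    rw [← intervalIntegral.integral_const_mul]
    apply intervalIntegral.integral_congr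
    intro s _
    show Real.exp (-(t - s)) * G s = Real.exp (-t) * (Real.exp s * G s)
    have hx : Real.exp (-(t - s)) = Real.exp (-t) * Real.exp s := by
      rw [← Real.exp_add]; ring_nf
    rw [hx, mul_assoc]
  have hφcont : Continuous φ :=
    (Real.continuous_exp.comp continuous_neg).mul
      (intervalIntegral.continuous_primitive
        (fun a b => ((Real.continuous_exp.mul hGcont).intervalIntegrable a b)) 0)
  have hφderiv : ∀ t, HasDerivAt φ (G t - φ t) t := by
    intro t
    have h1 : HasDerivAt (fun t => ∫ s in (0:ℝ)..t, Real.exp s * G s)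
        (Real.exp t * G t) t :=
      ((Real.continuous_exp.mul hGcont).integral_hasStrictDerivAt 0 t).hasDerivAt
    have h2 : HasDerivAt (fun t : ℝ => Real.exp (-t)) (-Real.exp (-t)) t := by
      exact (Real.hasDerivAt_exp (-t)).comp t (hasDerivAt_neg t) |>.congr_deriv (by ring)
    have h3 := h2.mul h1
    refine h3.congr_deriv ?_
    have hexp : Real.exp (-t) * (Real.exp t * G t) = G t := by
      rw [← mul_assoc, ← Real.exp_add]; simp
    simp only [hφ_def]
    linarith [hexp]
  -- the key identity: φ t + ∫_0^t φ = ∫_0^t G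
  have hkey0 : ∀ t : ℝ, φ t + (∫ s in (0:ℝ)..t, φ s) - (∫ s in (0:ℝ)..t, G s) = 0 := by
    intro t
    set F : ℝ → ℝ := fun t =>
      φ t + (∫ s in (0:ℝ)..t, φ s) - (∫ s in (0:ℝ)..t, G s) with hF_def
    have hFderiv : ∀ x, HasDerivAt F 0 x := by
      intro x
      have h2 : HasDerivAt (fun t => ∫ s in (0:ℝ)..t, φ s) (φ x) x :=
        (hφcont.integral_hasStrictDerivAt 0 x).hasDerivAt
      have h3 : HasDerivAt (fun t => ∫ s in (0:ℝ)..t, G s) (G x) x :=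
        (hGcont.integral_hasStrictDerivAt 0 x).hasDerivAt
      have := ((hφderiv x).add h2).sub h3
      refine this.congr_deriv ?_
      ring
    have hconst : F t = F 0 :=
      is_const_of_deriv_eq_zero (fun x => (hFderiv x).differentiableAt)
        (fun x => (hFderiv x).deriv) t 0
    have hF0 : F 0 = 0 := by simp [hF_def, hφ_def]
    show F t = 0
    rw [hconst, hF0]
  have hkey : ∀ T : ℝ, 0 ≤ T →
      u T + (∫ s in (0:ℝ)..T, u s) = ∫ s in (0:ℝ)..T, G s := by
    intro T hT
    have h1 : (∫ s in (0:ℝ)..T, φ s) = ∫ s in (0:ℝ)..T, u s := by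
      apply intervalIntegral.integral_congr
      intro s hs
      rw [Set.uIcc_of_le hT] at hs
      exact (heqφ s hs.1).symm
    have := hkey0 T
    rw [h1] at this
    rw [heqφ T hT]
    linarith
  -- integrabilities
  have huInt : IntegrableOn u (Set.Ioi 0) := by
    apply hL1.congr_fun _ measurableSet_Ioi
    intro x hx
    exact (hmax x (le_of_lt hx)).symm
  have huαInt : IntegrableOn (fun s => u (α * s)) (Set.Ioi 0) := by
    rw [integrableOn_Ioi_comp_mul_left_iff u 0 hαpos, mul_zero]
    exact huInt
  have hGInt : IntegrableOn G (Set.Ioi 0) := by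
    apply Integrable.mono (huαInt.const_mul 2) hGcont.aestronglyMeasurable.restrict
    filter_upwards with s
    rw [Real.norm_eq_abs, Real.norm_eq_abs, abs_of_nonneg (hG0 s),
      abs_of_nonneg (mul_nonneg two_pos.le (hu0 (α * s)))]
    exact hGle s
  set I : ℝ := ∫ x in Set.Ioi (0:ℝ), u x with hI_def
  set J : ℝ := ∫ x in Set.Ioi (0:ℝ), G x with hJ_def
  have hA : Tendsto (fun T => ∫ s in (0:ℝ)..T, u s) atTop (nhds I) :=
    intervalIntegral_tendsto_integral_Ioi 0 huInt tendsto_id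
  have hB : Tendsto (fun T => ∫ s in (0:ℝ)..T, G s) atTop (nhds J) :=
    intervalIntegral_tendsto_integral_Ioi 0 hGInt tendsto_id
  -- u tends to J - I at infinity
  have hut : Tendsto u atTop (nhds (J - I)) := by
    apply (hB.sub hA).congr'
    filter_upwards [eventually_ge_atTop (0:ℝ)] with T hT
    have := hkey T hT
    linarith
  have hJI_nonneg : 0 ≤ J - I := le_of_tendsto_of_tendsto' tendsto_const_nhds hut
    fun x => hu0 x
  -- J - I ≤ 0 since u is integrable on Ioi 0
  have hJI_nonpos : J - I ≤ 0 := by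
    by_contra hpos
    push_neg at hpos
    have hev : ∀ᶠ T in atTop, (J - I) / 2 ≤ u T :=
      hut.eventually (eventually_ge_nhds (show (J-I)/2 < J - I by linarith))
    obtain ⟨T₀, hT₀⟩ := (hev.and (eventually_ge_atTop (0:ℝ))).exists_forall_of_atTop
    -- A T ≥ A T₀ + (L/2)(T - T₀) for T ≥ T₀, so A → ∞, contradiction
    have hmono : ∀ T, T₀ ≤ T →
        (∫ s in (0:ℝ)..T₀, u s) + (J - I)/2 * (T - T₀) ≤ ∫ s in (0:ℝ)..T, u s := by
      intro T hT
      have hsplit : (∫ s in (0:ℝ)..T₀, u s) + (∫ s in T₀..T, u s)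
          = ∫ s in (0:ℝ)..T, u s :=
        intervalIntegral.integral_add_adjacent_intervals
          (hucont.intervalIntegrable _ _) (hucont.intervalIntegrable _ _)
      have hlow : (J - I)/2 * (T - T₀) ≤ ∫ s in T₀..T, u s := by
        have := intervalIntegral.integral_mono_on hT
          (intervalIntegrable_const : IntervalIntegrable (fun _ => (J-I)/2) volume T₀ T)
          (hucont.intervalIntegrable _ _)
          (fun s hs => (hT₀ s (hs.1)).1)
        rw [intervalIntegral.integral_const, smul_eq_mul] at this
        nlinarith [this]
      linarith
    have hlin : Tendsto (fun T : ℝ => (∫ s in (0:ℝ)..T₀, u s) + (J - I)/2 * (T - T₀))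
        atTop atTop := by
      apply tendsto_atTop_add_const_left
      apply Tendsto.const_mul_atTop (show (0:ℝ) < (J - I)/2 by linarith)
      exact tendsto_atTop_add_const_right _ (-T₀) tendsto_id
    have htop : Tendsto (fun T => ∫ s in (0:ℝ)..T, u s) atTop atTop := by
      apply tendsto_atTop_mono' _ _ hlin
      filter_upwards [eventually_ge_atTop T₀] with T hT
      exact hmono T hT
    exact (not_tendsto_atTop_of_tendsto_nhds hA) htop
  have hJI : J = I := by linarith
  -- ∫ α u(α s) over Ioi 0 equals I
  have hscale : (∫ x in Set.Ioi (0:ℝ), α * u (α * x)) = I := by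
    have h1 : Tendsto (fun T => ∫ s in (0:ℝ)..T, α * u (α * s)) atTop
        (nhds (∫ x in Set.Ioi (0:ℝ), α * u (α * x))) :=
      intervalIntegral_tendsto_integral_Ioi 0 (huαInt.const_mul α) tendsto_id
    have h2 : Tendsto (fun T => ∫ s in (0:ℝ)..T, α * u (α * s)) atTop (nhds I) := by
      have heqi : ∀ T : ℝ, (∫ s in (0:ℝ)..T, α * u (α * s))
          = ∫ s in (0:ℝ)..(α * T), u s := by
        intro T
        rw [intervalIntegral.integral_const_mul]
        have := intervalIntegral.smul_integral_comp_mul_left (a := (0:ℝ)) (b := T) u α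
        rw [mul_zero] at this
        simpa [smul_eq_mul] using this
      simp only [heqi]
      exact hA.comp (tendsto_id.const_mul_atTop hαpos)
    exact tendsto_nhds_unique h1 h2
  -- equality of integrals forces pointwise equality
  have hzero_ae : (fun x => G x - α * u (α * x)) =ᵐ[volume.restrict (Set.Ioi 0)] 0 := by
    rw [← integral_eq_zero_iff_of_nonneg_ae]
    · rw [integral_sub hGInt (huαInt.const_mul α), hscale]
      have : (∫ x in Set.Ioi (0:ℝ), G x) = J := hJ_def.symm
      rw [this]
      linarith
    · filter_upwards with s
      simp only [Pi.zero_apply, sub_nonneg]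
      exact hGge s
    · exact hGInt.sub (huαInt.const_mul α)
  have hzero : ∀ x : ℝ, 0 < x → G x = α * u (α * x) := by
    by_contra hcon
    push_neg at hcon
    obtain ⟨x₀, hx₀, hne⟩ := hcon
    set h : ℝ → ℝ := fun x => G x - α * u (α * x) with hh_def
    have hhcont : Continuous h := hGcont.sub (continuous_const.mul huα)
    have hO : IsOpen ({x | 0 < h x} ∩ Set.Ioi 0) :=
      (isOpen_lt continuous_const hhcont).inter isOpen_Ioi
    have hx₀O : x₀ ∈ {x | 0 < h x} ∩ Set.Ioi 0 := by
      refine ⟨?_, hx₀⟩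
      have h1 : 0 ≤ h x₀ := by simp only [hh_def, sub_nonneg]; exact hGge x₀
      have h2 : h x₀ ≠ 0 := by
        intro hc
        have hc' : G x₀ - α * u (α * x₀) = 0 := hc
        exact hne (sub_eq_zero.mp hc')
      exact lt_of_le_of_ne h1 (Ne.symm h2)
    have hpos := hO.measure_pos volume ⟨x₀, hx₀O⟩
    have hnull : volume ({x | 0 < h x} ∩ Set.Ioi 0) = 0 := by
      have hae : ∀ᵐ x, x ∈ Set.Ioi (0:ℝ) → h x = 0 := by
        have := (ae_restrict_iff' measurableSet_Ioi).1 hzero_ae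
        filter_upwards [this] with x hx hx'
        exact hx hx'
      apply measure_mono_null _ (ae_iff.1 hae)
      rintro x ⟨hx1, hx2⟩ hcon
      exact (ne_of_gt (show 0 < h x from hx1)) (hcon hx2)
    exact absurd hnull (ne_of_gt hpos)
  -- dichotomy: v s ∈ {0, 2-α} for all s > 0
  have hdich : ∀ s : ℝ, 0 < s → v s = 0 ∨ v s = 2 - α := by
    intro s hs
    have hx : 0 < s / α := by positivity
    have hz := hzero (s / α) hx
    simp only [hG_def] at hz
    rw [mul_div_cancel₀ _ (ne_of_gt hαpos)] at hz
    have : u s * ((2 - α) - u s) = 0 := by nlinarith [hz]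
    rcases mul_eq_zero.1 this with h | h
    · left; rw [← hmax s hs.le]; exact h
    · right; rw [← hmax s hs.le]; linarith
  -- v 0 = 0
  have hv0 : v 0 = 0 := by
    have := heq 0 le_rfl
    simpa using this
  -- conclude by IVT
  intro t ht
  rcases eq_or_lt_of_le ht with h | h
  · rw [← h]; exact hv0
  by_contra hvt
  have hvt2 : v t = 2 - α := (hdich t h).resolve_left hvt
  have hIVT : Set.Icc (v 0) (v t) ⊆ v '' Set.Icc 0 t :=
    intermediate_value_Icc ht (hvcont.mono (by
      intro x hx; exact hx.1))
  have hmem : (2 - α)/2 ∈ Set.Icc (v 0) (v t) := by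
    rw [hv0, hvt2]
    constructor <;> linarith
  obtain ⟨c, hc, hvc⟩ := hIVT hmem
  rcases eq_or_lt_of_le hc.1 with hc0 | hc0
  · rw [← hc0, hv0] at hvc; linarith
  · rcases hdich c hc0 with hz | hz <;> rw [hz] at hvc <;> linarith
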